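/- Post property of local zone transitions: if (q,Z) =u=> (q',Z') is a sequence of local zone transitions and v' ∈ Z', then there exists v ∈ Z and a local run (q,v) =u=> (q',v'). -/

import Mathlib

/-! A valuation of the successor zone `local-elapse([R](Z ∩ Z_g ∩ Z_sync))` is a local delay of
`[R]w` for some `w ∈ Z` that satisfies the guards and is synchronized on `dom b`; such a `w`
takes the local action step to `[R]w`. Induction on the word, merging the delay that ends each
zone step into the delay that starts the remaining run, since local delays compose. -/

open Classical

/-- Comparison operators appearing in guards `x ~ c`. -/
inductive Cmp | lt | le | eq | ge | gt

def Cmp.sat : Cmp → ℝ → ℤ → Prop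
  | .lt, r, c => r < (c : ℝ)
  | .le, r, c => r ≤ (c : ℝ)
  | .eq, r, c => r = (c : ℝ)
  | .ge, r, c => (c : ℝ) ≤ r
  | .gt, r, c => (c : ℝ) < r

/-- A guard: a finite conjunction of constraints `x ~ c` on clocks. -/
abbrev Guard (Clock : Type) := List (Clock × Cmp × ℤ)

/-- A difference constraint `y₁ - y₂ ◁ c` over variables `V`;
the boolean is `true` for strict `<` and `false` for `≤`. -/
abbrev DiffConstraint (V : Type) := V × V × Bool × ℤ

/-- Satisfaction of a difference constraint. -/
def csat {V : Type} (v : V → ℝ) (c : DiffConstraint V) : Prop :=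
  if c.2.2.1 then v c.1 - v c.2.1 < (c.2.2.2 : ℝ) else v c.1 - v c.2.1 ≤ (c.2.2.2 : ℝ)

/-- A network of timed automata: `k` processes, each owning its clocks and
locations; each action `b` has a domain `dom b` of synchronizing processes, and
for each process in the domain a set of `b`-transitions (location, guard, reset
set, target location), whose guards and resets only mention own clocks. -/
structure Network where
  k : ℕ
  kpos : 0 < k
  Clock : Type
  [clockFin : Fintype Clock]
  owner : Clock → Fin k
  Act : Type
  dom : Act → Finset (Fin k)
  Loc : Fin k → Type
  init : ∀ p, Loc p
  Trans : ∀ (_ : Act) (p : Fin k), Set (Loc p × Guard Clock × Set Clock × Loc p)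
  trans_wf : ∀ b p tr, tr ∈ Trans b p →
    (∀ c ∈ tr.2.1, owner c.1 = p) ∧ (∀ x ∈ tr.2.2.1, owner x = p)

attribute [instance] Network.clockFin

namespace Network

variable (N : Network)

/-- Global (discrete) states of the network. -/
abbrev State := ∀ p, N.Loc p

/-- Variables of local valuations: offset variables `x̃` and reference clocks `t_p`. -/
abbrev LVar := N.Clock ⊕ Fin N.k

/-- Variables of global valuations: offset variables `x̃` and the global reference clock `t`. -/
abbrev GVar := N.Clock ⊕ Unit

abbrev LVal := N.LVar → ℝ

abbrev GVal := N.GVar → ℝ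

/-- A local valuation: nonnegative, and each offset is below the owner's reference clock. -/
def IsLVal (v : N.LVal) : Prop :=
  (∀ y, 0 ≤ v y) ∧ ∀ x : N.Clock, v (.inl x) ≤ v (.inr (N.owner x))

/-- A global valuation: nonnegative, and each offset is below the global time `t`. -/
def IsGVal (v : N.GVal) : Prop :=
  (∀ y, 0 ≤ v y) ∧ ∀ x : N.Clock, v (.inl x) ≤ v (.inr ())

/-- Satisfaction of a guard by a local valuation: the value of clock `x` is
`v t_p - v x̃` where `p` owns `x`. -/
def lgsat (v : N.LVal) (g : Guard N.Clock) : Prop :=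
  ∀ c ∈ g, Cmp.sat c.2.1 (v (.inr (N.owner c.1)) - v (.inl c.1)) c.2.2

/-- Satisfaction of a guard by a global valuation: the value of clock `x` is `v t - v x̃`. -/
def ggsat (v : N.GVal) (g : Guard N.Clock) : Prop :=
  ∀ c ∈ g, Cmp.sat c.2.1 (v (.inr ()) - v (.inl c.1)) c.2.2

/-- Global delay: only the global reference clock advances. -/
def gdelay (v : N.GVal) (δ : ℝ) : N.GVal :=
  fun y => match y with
    | .inl x => v (.inl x)
    | .inr _ => v (.inr ()) + δ

/-- `v'` is obtained from `v` by a (finite) sequence of local delays; equivalently,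
each reference clock advances by some nonnegative amount, offsets are unchanged. -/
def ldelayed (v v' : N.LVal) : Prop :=
  ∃ δ : Fin N.k → ℝ, (∀ p, 0 ≤ δ p) ∧
    v' = fun y => match y with
      | .inl x => v (.inl x)
      | .inr p => v (.inr p) + δ p

/-- Reset of the clocks in `R` in a global valuation. -/
noncomputable def greset (R : Set N.Clock) (v : N.GVal) : N.GVal :=
  fun y => match y with
    | .inl x => if x ∈ R then v (.inr ()) else v (.inl x)
    | .inr u => v (.inr u)

/-- Reset of the clocks in `R` in a local valuation: `x̃` is set to the local
time of the process owning `x`. -/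
noncomputable def lreset (R : Set N.Clock) (v : N.LVal) : N.LVal :=
  fun y => match y with
    | .inl x => if x ∈ R then v (.inr (N.owner x)) else v (.inl x)
    | .inr p => v (.inr p)

/-- Global action step on action `b`. -/
def gact (b : N.Act) (c c' : N.State × N.GVal) : Prop :=
  ∃ tr : ∀ p, p ∈ N.dom b → N.Loc p × Guard N.Clock × Set N.Clock × N.Loc p,
    (∀ p (h : p ∈ N.dom b),
      tr p h ∈ N.Trans b p ∧ (tr p h).1 = c.1 p ∧ (tr p h).2.2.2 = c'.1 p) ∧
    (∀ p, p ∉ N.dom b → c'.1 p = c.1 p) ∧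
    (∀ p (h : p ∈ N.dom b), N.ggsat c.2 (tr p h).2.1) ∧
    c'.2 = N.greset {x | ∃ p h, x ∈ (tr p h).2.2.1} c.2

/-- Local action step on action `b`: additionally the reference clocks of the
processes in `dom b` must agree. -/
def lact (b : N.Act) (c c' : N.State × N.LVal) : Prop :=
  ∃ tr : ∀ p, p ∈ N.dom b → N.Loc p × Guard N.Clock × Set N.Clock × N.Loc p,
    (∀ p (h : p ∈ N.dom b),
      tr p h ∈ N.Trans b p ∧ (tr p h).1 = c.1 p ∧ (tr p h).2.2.2 = c'.1 p) ∧
    (∀ p, p ∉ N.dom b → c'.1 p = c.1 p) ∧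
    (∀ p ∈ N.dom b, ∀ p' ∈ N.dom b, c.2 (.inr p) = c.2 (.inr p')) ∧
    (∀ p (h : p ∈ N.dom b), N.lgsat c.2 (tr p h).2.1) ∧
    c'.2 = N.lreset {x | ∃ p h, x ∈ (tr p h).2.2.1} c.2

/-- Global run on a word of actions: delays and action steps alternate,
starting and ending with a (possibly zero) delay. -/
inductive GRun : List N.Act → (N.State × N.GVal) → (N.State × N.GVal) → Prop
  | nil {q v} (δ : ℝ) (hδ : 0 ≤ δ) : GRun [] (q, v) (q, N.gdelay v δ)
  | cons {b u q v c1 c2} (δ : ℝ) (hδ : 0 ≤ δ)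
      (hb : N.gact b (q, N.gdelay v δ) c1) (h : GRun u c1 c2) :
      GRun (b :: u) (q, v) c2

/-- Local run on a word of actions: sequences of local delays and local action
steps alternate. -/
inductive LRun : List N.Act → (N.State × N.LVal) → (N.State × N.LVal) → Prop
  | nil {q v v'} (hd : N.ldelayed v v') : LRun [] (q, v) (q, v')
  | cons {b u q v v1 c1 c2} (hd : N.ldelayed v v1)
      (hb : N.lact b (q, v1) c1) (h : LRun u c1 c2) :
      LRun (b :: u) (q, v) c2

/-- Local run recording, for each action, its execution time: the common value
of the reference clocks of `dom b` when the step is taken. -/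
inductive LRunT : List (N.Act × ℝ) → (N.State × N.LVal) → (N.State × N.LVal) → Prop
  | nil {q v v'} (hd : N.ldelayed v v') : LRunT [] (q, v) (q, v')
  | cons {b θ u q v v1 c1 c2} (hd : N.ldelayed v v1)
      (hb : N.lact b (q, v1) c1) (hθ : ∀ p ∈ N.dom b, v1 (.inr p) = θ)
      (h : LRunT u c1 c2) :
      LRunT ((b, θ) :: u) (q, v) c2

/-- Equivalence of action sequences: generated by swapping adjacent actions
with disjoint domains. -/
inductive equiv : List N.Act → List N.Act → Prop
  | swap (u w : List N.Act) (a b : N.Act) (h : Disjoint (N.dom a) (N.dom b)) :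
      equiv (u ++ a :: b :: w) (u ++ b :: a :: w)
  | refl (u : List N.Act) : equiv u u
  | trans {u v w} : equiv u v → equiv v w → equiv u w

/-- A local valuation is synchronized if all reference clocks agree. -/
def Synchronized (v : N.LVal) : Prop :=
  ∀ p p' : Fin N.k, v (.inr p) = v (.inr p')

/-- The global valuation associated to a (synchronized) local valuation. -/
def toGlobal (v : N.LVal) : N.GVal :=
  fun y => match y with
    | .inl x => v (.inl x)
    | .inr _ => v (.inr ⟨0, N.kpos⟩)

/-- The synchronized local valuation associated to a global valuation. -/
def toLocal (v : N.GVal) : N.LVal :=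
  fun y => match y with
    | .inl x => v (.inl x)
    | .inr _ => v (.inr ())

/-- The synchronized valuations of a set of local valuations. -/
def syncSet (S : Set N.LVal) : Set N.LVal := {v ∈ S | N.Synchronized v}

/-- The set of local valuations defined by a list of difference constraints. -/
def lzset (L : List (DiffConstraint N.LVar)) : Set N.LVal :=
  {v | N.IsLVal v ∧ ∀ c ∈ L, csat v c}

/-- The set of global valuations defined by a list of difference constraints. -/
def gzset (L : List (DiffConstraint N.GVar)) : Set N.GVal :=
  {v | N.IsGVal v ∧ ∀ c ∈ L, csat v c}

/-- Local zones: sets of local valuations definable by difference constraints. -/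
def IsLZone (S : Set N.LVal) : Prop := ∃ L, S = N.lzset L

/-- Global zones: sets of global valuations definable by difference constraints. -/
def IsGZone (S : Set N.GVal) : Prop := ∃ L, S = N.gzset L

/-- Local-time elapse of a set of local valuations. -/
def lelapse (S : Set N.LVal) : Set N.LVal := {v' | ∃ v ∈ S, N.ldelayed v v'}

/-- Global time elapse of a set of global valuations. -/
def gelapse (S : Set N.GVal) : Set N.GVal :=
  {v' | ∃ v ∈ S, ∃ δ, 0 ≤ δ ∧ v' = N.gdelay v δ}

/-- Local zone graph step on action `b`:
`Z' = local-elapse([R](Z ∩ Z_g ∩ Z_sync))`, required nonempty. -/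
def lzstep (b : N.Act) (c c' : N.State × Set N.LVal) : Prop :=
  ∃ tr : ∀ p, p ∈ N.dom b → N.Loc p × Guard N.Clock × Set N.Clock × N.Loc p,
    (∀ p (h : p ∈ N.dom b),
      tr p h ∈ N.Trans b p ∧ (tr p h).1 = c.1 p ∧ (tr p h).2.2.2 = c'.1 p) ∧
    (∀ p, p ∉ N.dom b → c'.1 p = c.1 p) ∧
    c'.2 = N.lelapse ((N.lreset {x | ∃ p h, x ∈ (tr p h).2.2.1}) ''
      (c.2 ∩ {v | ∀ p (h : p ∈ N.dom b), N.lgsat v (tr p h).2.1}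
           ∩ {v | ∀ p ∈ N.dom b, ∀ p' ∈ N.dom b, v (.inr p) = v (.inr p')})) ∧
    (c'.2).Nonempty

/-- Sequence of local zone graph steps along a word. -/
inductive LZRun : List N.Act → (N.State × Set N.LVal) → (N.State × Set N.LVal) → Prop
  | nil (c) : LZRun [] c c
  | cons {b u c c1 c2} (hb : N.lzstep b c c1) (h : LZRun u c1 c2) :
      LZRun (b :: u) c c2

/-- The initial (discrete) state of the network. -/
def initState : N.State := N.init

/-- The initial global valuation: everything is `0`. -/
def gvalInit : N.GVal := fun _ => 0

/-- The initial local valuation: everything is `0`. -/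
def lvalInit : N.LVal := fun _ => 0

/-- The initial node's zone in the local zone graph. -/
def lzoneInit : Set N.LVal := N.lelapse {N.lvalInit}

/-- State `q` is reachable in the global-time semantics. -/
def GReach (q : N.State) : Prop :=
  ∃ u v, N.GRun u (N.initState, N.gvalInit) (q, v)

/-- State `q` is reachable in the local-time semantics. -/
def LReach (q : N.State) : Prop :=
  ∃ u v, N.LRun u (N.initState, N.lvalInit) (q, v)

/-- Time-abstract simulation between global valuations. -/
def TASim (sim : N.GVal → N.GVal → Prop) : Prop :=
  ∀ v1 v2, sim v1 v2 → ∀ q b δ1 q' v1', 0 ≤ δ1 →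
    N.gact b (q, N.gdelay v1 δ1) (q', v1') →
    ∃ δ2, 0 ≤ δ2 ∧ ∃ v2', N.gact b (q, N.gdelay v2 δ2) (q', v2') ∧ sim v1' v2'

end Network

/-- A local sync graph over a network `N`, based on an abstraction `abs` over
global zones: a subgraph of the local zone graph with covered/uncovered nodes,
satisfying conditions C0–C4. -/
structure SyncGraph (N : Network) (abs : Set N.GVal → Set N.GVal) where
  nodes : Set (N.State × Set N.LVal)
  covered : N.State × Set N.LVal → Prop
  edges : (N.State × Set N.LVal) → (N.State × Set N.LVal) → Prop
  edges_mem : ∀ s s', edges s s' → s ∈ nodes ∧ s' ∈ nodes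
  edges_lzg : ∀ s s', edges s s' → ∃ b, N.lzstep b s s'
  init_mem : (N.initState, N.lzoneInit) ∈ nodes
  init_unc : ¬ covered (N.initState, N.lzoneInit)
  reach : ∀ s ∈ nodes, Relation.ReflTransGen edges (N.initState, N.lzoneInit) s
  unc_succ : ∀ s ∈ nodes, ¬ covered s → ∀ b s', N.lzstep b s s' → edges s s'
  cov_sub : ∀ s ∈ nodes, covered s → ∃ s' ∈ nodes, ¬ covered s' ∧ s.1 = s'.1 ∧
    N.toGlobal '' N.syncSet s.2 ⊆ abs (N.toGlobal '' N.syncSet s'.2)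
  cov_nosucc : ∀ s s', covered s → ¬ edges s s'

/-- A list of difference constraints is canonical (every constraint is tight):
no constraint is implied by the remaining ones. -/
def canonicalL (N : Network) (L : List (DiffConstraint N.LVar)) : Prop :=
  ∀ c ∈ L, ∃ v, N.IsLVal v ∧ (∀ c' ∈ L, c' ≠ c → csat v c') ∧ ¬ csat v c

/-- Minea's region-like equivalence with maximal constant `cmax`. -/
def regEquiv {V : Type} (cmax : ℤ) (v1 v2 : V → ℝ) : Prop :=
  ∀ a b : V, (⌊v1 a - v1 b⌋ = ⌊v2 a - v2 b⌋) ∨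
    (⌊v1 a - v1 b⌋ > cmax ∧ ⌊v2 a - v2 b⌋ > cmax) ∨
    (⌊v1 a - v1 b⌋ < -cmax ∧ ⌊v2 a - v2 b⌋ < -cmax)

namespace Network

variable {N : Network}

theorem ldelayed_refl (v : N.LVal) : N.ldelayed v v :=
  ⟨fun _ => 0, fun _ => le_rfl, by funext y; cases y <;> simp⟩

theorem ldelayed_trans {v₁ v₂ v₃ : N.LVal} (h₁₂ : N.ldelayed v₁ v₂) (h₂₃ : N.ldelayed v₂ v₃) :
    N.ldelayed v₁ v₃ := by
  obtain ⟨δ₁, hδ₁, rfl⟩ := h₁₂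
  obtain ⟨δ₂, hδ₂, rfl⟩ := h₂₃
  refine ⟨δ₁ + δ₂, fun p => add_nonneg (hδ₁ p) (hδ₂ p), ?_⟩
  funext y
  cases y <;> simp [add_assoc]

theorem LRun.of_ldelayed {u : List N.Act} {q : N.State} {v w : N.LVal} {c : N.State × N.LVal}
    (hd : N.ldelayed v w) (h : N.LRun u (q, w) c) : N.LRun u (q, v) c := by
  cases h with
  | nil hd' => exact .nil (ldelayed_trans hd hd')
  | cons hd' hb h' => exact .cons (ldelayed_trans hd hd') hb h'

theorem lzstep.exists_lact {b : N.Act} {c c' : N.State × Set N.LVal} (h : N.lzstep b c c')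
    {v' : N.LVal} (hv' : v' ∈ c'.2) :
    ∃ v ∈ c.2, ∃ w, N.lact b (c.1, v) (c'.1, w) ∧ N.ldelayed w v' := by
  obtain ⟨tr, htr, hidle, hZ', -⟩ := h
  rw [hZ'] at hv'
  obtain ⟨_, ⟨v, ⟨⟨hvZ, hguard⟩, hsync⟩, rfl⟩, hdelay⟩ := hv'
  exact ⟨v, hvZ, _, ⟨tr, htr, hidle, hsync, hguard, rfl⟩, hdelay⟩

theorem LZRun.exists_lrun {u : List N.Act} {c c' : N.State × Set N.LVal} (hr : N.LZRun u c c')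
    {v' : N.LVal} (hv' : v' ∈ c'.2) : ∃ v ∈ c.2, N.LRun u (c.1, v) (c'.1, v') := by
  induction hr generalizing v' with
  | nil => exact ⟨v', hv', .nil (ldelayed_refl v')⟩
  | cons hb _ ih =>
    obtain ⟨v₁, hv₁, hrun⟩ := ih hv'
    obtain ⟨v, hv, w, hact, hdelay⟩ := hb.exists_lact hv₁
    exact ⟨v, hv, .cons (ldelayed_refl v) hact (hrun.of_ldelayed hdelay)⟩

end Network

theorem stmt10 (N : Network) (u : List N.Act) (q q' : N.State)
    (Z Z' : Set N.LVal) (hr : N.LZRun u (q, Z) (q', Z'))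
    (v' : N.LVal) (hv' : v' ∈ Z') :
    ∃ v ∈ Z, N.LRun u (q, v) (q', v') :=
  hr.exists_lrun hv'
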